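/- arXiv:2502.12746 — 9 statements merged into one kernel-verified Lean document; each statement's English description precedes it below -/
import Mathlib

section
/- Let γ > 1, g > 0, t₁ ∈ (0,1), and let q : [0,1] → ℝ be continuous with q(y) > 0 for all y ∈ [0,1]. Set μ² := (γ−1)/(γ+1) and define t(y) := ((γ+1)/2)·√(1 − (1 − μ⁴(1 + 2t₁/(γ−1))²)·exp(−(γ−1)·g·∫_y^1 q(τ)⁻² dτ)) − (γ−1)/2 for y ∈ [0,1]. Then t(1) = t₁, and for every y ∈ [0,1] the function t is differentiable at y (within [0,1]) with derivative t'(y) = −(g/q(y)²)·((γ−1)/4)·(1 − γ − 2t(y) + (γ+1)²/(γ−1+2t(y))). -/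
open Real Set

/-!
In terms of `w := (γ - 1 + 2t)/(γ + 1)`, i.e. `t = (γ + 1)/2 · w - (γ - 1)/2`, the right-hand side
of the ODE becomes `-(g/q²)·(γ² - 1)/4·(1 - w²)/w`, so the ODE reads
`(1 - w²)' = (γ - 1)·g·q⁻²·(1 - w²)`. This linear equation is solved by
`1 - w² = C·exp(-(γ - 1)·g·∫_y^1 q⁻²)`, and `C = 1 - μ⁴(1 + 2t₁/(γ - 1))²` makes
`w(1) = μ²(1 + 2t₁/(γ - 1))`, i.e. `t(1) = t₁`. Since `t₁ ∈ (0,1)` gives `0 ≤ C < 1`, the radicand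
stays positive on `[0,1]`.
-/

theorem hasDerivWithinAt_integral_left_Icc {E : Type*} [NormedAddCommGroup E] [NormedSpace ℝ E]
    [CompleteSpace E] {f : ℝ → E} {a b y : ℝ} (hf : ContinuousOn f (Icc a b)) (hy : y ∈ Icc a b) :
    HasDerivWithinAt (fun u => ∫ τ in u..b, f τ) (-f y) (Icc a b) y := by
  have := Fact.mk hy
  exact intervalIntegral.integral_hasDerivWithinAt_left
    ((hf.mono (Icc_subset_Icc hy.1 le_rfl)).intervalIntegrable_of_Icc hy.2)
    (hf.stronglyMeasurableAtFilter_nhdsWithin measurableSet_Icc y) (hf.continuousWithinAt hy)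

theorem HasDerivWithinAt.sqrt_one_sub_mul_exp {F : ℝ → ℝ} {F' C k y : ℝ} {s : Set ℝ}
    (hF : HasDerivWithinAt F F' s y) (hpos : 0 < 1 - C * Real.exp (-(k * F y))) :
    HasDerivWithinAt (fun u => √(1 - C * Real.exp (-(k * F u))))
      (k * F' * (1 - √(1 - C * Real.exp (-(k * F y))) ^ 2) /
        (2 * √(1 - C * Real.exp (-(k * F y))))) s y := by
  convert (((hF.const_mul k).fun_neg.exp.const_mul C).const_sub 1).sqrt hpos.ne' using 1
  rw [sq_sqrt hpos.le]
  ring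

theorem one_sub_mul_exp_neg_pos {C x : ℝ} (hC₀ : 0 ≤ C) (hC₁ : C < 1) (hx : 0 ≤ x) :
    0 < 1 - C * Real.exp (-x) := by
  have : C * Real.exp (-x) ≤ C := mul_le_of_le_one_right hC₀ (exp_le_one_iff.2 (neg_nonpos.2 hx))
  linarith

theorem mach_rhs_of_affine {γ w : ℝ} (hγ : γ + 1 ≠ 0) (hw : w ≠ 0) :
    1 - γ - 2 * ((γ + 1) / 2 * w - (γ - 1) / 2) +
        (γ + 1) ^ 2 / (γ - 1 + 2 * ((γ + 1) / 2 * w - (γ - 1) / 2)) =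
      (γ + 1) * (1 - w ^ 2) / w := by
  field_simp
  ring

/-- The explicit function
`t(y) = ((γ+1)/2)·√(1 − (1 − μ⁴(1 + 2t₁/(γ−1))²)·exp(−(γ−1)g∫_y^1 q(τ)⁻² dτ)) − (γ−1)/2`
satisfies `t(1) = t₁` and solves the ODE
`t'(y) = −(g/q(y)²)·((γ−1)/4)·(1 − γ − 2t(y) + (γ+1)²/(γ−1+2t(y)))` on `[0,1]`. -/
theorem mach_ode_explicit_solution
    (γ g t₁ : ℝ) (q : ℝ → ℝ) (hγ : 1 < γ) (hg : 0 < g)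
    (ht₁ : t₁ ∈ Set.Ioo (0 : ℝ) 1)
    (hqc : ContinuousOn q (Set.Icc 0 1))
    (hqpos : ∀ y ∈ Set.Icc (0 : ℝ) 1, 0 < q y)
    (t : ℝ → ℝ)
    (ht : ∀ y, t y =
      (γ + 1) / 2 *
        Real.sqrt (1 -
          (1 - ((γ - 1) / (γ + 1)) ^ 2 * (1 + 2 * t₁ / (γ - 1)) ^ 2) *
            Real.exp (-((γ - 1) * g * ∫ τ in y..1, (q τ ^ 2)⁻¹)))
      - (γ - 1) / 2) :
    t 1 = t₁ ∧
      ∀ y ∈ Set.Icc (0 : ℝ) 1,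
        HasDerivWithinAt t
          (-(g / q y ^ 2) * ((γ - 1) / 4) *
            (1 - γ - 2 * t y + (γ + 1) ^ 2 / (γ - 1 + 2 * t y)))
          (Set.Icc 0 1) y := by
  set s := (γ - 1 + 2 * t₁) / (γ + 1) with hs
  have hμs : ((γ - 1) / (γ + 1)) ^ 2 * (1 + 2 * t₁ / (γ - 1)) ^ 2 = s ^ 2 := by
    have : γ - 1 ≠ 0 := by linarith
    rw [hs, ← mul_pow]; field_simp
  have hs₀ : 0 < s := div_pos (by linarith [ht₁.1]) (by linarith)
  have hs₁ : s < 1 := (div_lt_one (by linarith)).2 (by linarith [ht₁.2])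
  set F := fun u => ∫ τ in u..1, (q τ ^ 2)⁻¹
  set w := fun u => √(1 - (1 - s ^ 2) * Real.exp (-((γ - 1) * g * F u)))
  have ht' : t = fun u => (γ + 1) / 2 * w u - (γ - 1) / 2 := by
    funext u; rw [ht u, hμs]
  refine ⟨?_, fun y hy => ?_⟩
  · simp only [ht', w, F, intervalIntegral.integral_same, mul_zero, neg_zero, exp_zero, mul_one,
      sub_sub_cancel]
    rw [sqrt_sq hs₀.le, hs]
    field_simp; ring
  have hq : q y ≠ 0 := (hqpos y hy).ne'
  have hF : HasDerivWithinAt F (-(q y ^ 2)⁻¹) (Icc 0 1) y :=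
    hasDerivWithinAt_integral_left_Icc
      ((hqc.pow 2).inv₀ fun τ hτ => (pow_pos (hqpos τ hτ) 2).ne') hy
  have hFnonneg : 0 ≤ F y :=
    intervalIntegral.integral_nonneg hy.2 fun τ _ => by positivity
  have hpos := one_sub_mul_exp_neg_pos (C := 1 - s ^ 2) (by nlinarith) (by nlinarith)
    (by positivity : 0 ≤ (γ - 1) * g * F y)
  have hw : w y ≠ 0 := (sqrt_pos.2 hpos).ne'
  rw [congrFun ht' y, mach_rhs_of_affine (by linarith) hw, ht']
  refine (((hF.sqrt_one_sub_mul_exp hpos).const_mul ((γ + 1) / 2)).sub_const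
    ((γ - 1) / 2)).congr_deriv ?_
  dsimp only [w] at hw ⊢
  field_simp
  ring
end

section
/- Let γ > 1, g > 0, t₁ ∈ (0,1), and let q : [0,1] → ℝ be continuous with q(y) > 0 for all y ∈ [0,1]. Set μ² := (γ−1)/(γ+1) and define t(y) := ((γ+1)/2)·√(1 − (1 − μ⁴(1 + 2t₁/(γ−1))²)·exp(−(γ−1)·g·∫_y^1 q(τ)⁻² dτ)) − (γ−1)/2 for y ∈ [0,1]. Then 0 < t(y) < 1 for all y ∈ [0,1], t is strictly decreasing on [0,1], and t(y) > t₁ for all y ∈ [0,1). -/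
open Real Set

/-- The explicit solution
`t(y) = ((γ+1)/2)·√(1 − (1 − μ⁴(1 + 2t₁/(γ−1))²)·exp(−(γ−1)g∫_y^1 q(τ)⁻² dτ)) − (γ−1)/2`
satisfies `0 < t(y) < 1` on `[0,1]`, is strictly decreasing on `[0,1]`,
and satisfies `t(y) > t₁` for `y ∈ [0,1)`. -/
theorem mach_ode_solution_bounds
    (γ g t₁ : ℝ) (q : ℝ → ℝ) (hγ : 1 < γ) (hg : 0 < g)
    (ht₁ : t₁ ∈ Set.Ioo (0 : ℝ) 1)
    (hqc : ContinuousOn q (Set.Icc 0 1))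
    (hqpos : ∀ y ∈ Set.Icc (0 : ℝ) 1, 0 < q y)
    (t : ℝ → ℝ)
    (ht : ∀ y, t y =
      (γ + 1) / 2 *
        Real.sqrt (1 -
          (1 - ((γ - 1) / (γ + 1)) ^ 2 * (1 + 2 * t₁ / (γ - 1)) ^ 2) *
            Real.exp (-((γ - 1) * g * ∫ τ in y..1, (q τ ^ 2)⁻¹)))
      - (γ - 1) / 2) :
    (∀ y ∈ Set.Icc (0 : ℝ) 1, 0 < t y ∧ t y < 1) ∧
      StrictAntiOn t (Set.Icc 0 1) ∧
      ∀ y ∈ Set.Ico (0 : ℝ) 1, t₁ < t y := by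
  obtain ⟨ht₁0, ht₁1⟩ := ht₁
  have hγ1 : (0:ℝ) < γ - 1 := by linarith
  have hγ2 : (0:ℝ) < γ + 1 := by linarith
  set A : ℝ := 1 - ((γ - 1) / (γ + 1)) ^ 2 * (1 + 2 * t₁ / (γ - 1)) ^ 2 with hA
  set B : ℝ := (γ - 1 + 2 * t₁) / (γ + 1) with hB
  have hBeq : A = 1 - B ^ 2 := by
    rw [hA, hB]
    field_simp
  have hB0 : 0 < B := by
    rw [hB]; positivity
  have hB1 : B < 1 := by
    rw [hB, div_lt_one hγ2]; linarith
  have hA0 : 0 < A := by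
    rw [hBeq]; nlinarith
  have hA1 : A < 1 := by
    rw [hBeq]; nlinarith
  -- the integrand
  set f : ℝ → ℝ := fun τ => (q τ ^ 2)⁻¹ with hf
  have hfc : ContinuousOn f (Set.Icc 0 1) := by
    apply ContinuousOn.inv₀ (hqc.pow 2)
    intro x hx
    exact pow_ne_zero 2 (hqpos x hx).ne'
  have hfint : ∀ a ∈ Set.Icc (0:ℝ) 1, ∀ b ∈ Set.Icc (0:ℝ) 1,
      IntervalIntegrable f MeasureTheory.volume a b := by
    intro a ha b hb
    exact (hfc.mono (Set.uIcc_subset_Icc ha hb)).intervalIntegrable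
  set I : ℝ → ℝ := fun y => ∫ τ in y..1, f τ with hI
  have h01 : (0:ℝ) ∈ Set.Icc (0:ℝ) 1 := by constructor <;> norm_num
  have h11 : (1:ℝ) ∈ Set.Icc (0:ℝ) 1 := by constructor <;> norm_num
  have hInonneg : ∀ y ∈ Set.Icc (0:ℝ) 1, 0 ≤ I y := by
    intro y hy
    apply intervalIntegral.integral_nonneg hy.2
    intro u hu
    have : 0 < q u := hqpos u ⟨le_trans hy.1 hu.1, hu.2⟩
    positivity
  have hIanti : ∀ a ∈ Set.Icc (0:ℝ) 1, ∀ b ∈ Set.Icc (0:ℝ) 1, a < b → I b < I a := by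
    intro a ha b hb hab
    have hsplit : (∫ τ in a..b, f τ) + ∫ τ in b..1, f τ = ∫ τ in a..1, f τ :=
      intervalIntegral.integral_add_adjacent_intervals (hfint a ha b hb) (hfint b hb 1 h11)
    have hpos : 0 < ∫ τ in a..b, f τ := by
      apply intervalIntegral.intervalIntegral_pos_of_pos_on (hfint a ha b hb) _ hab
      intro x hx
      have : 0 < q x := hqpos x ⟨le_trans ha.1 hx.1.le, le_trans hx.2.le hb.2⟩
      positivity
    have : I a = (∫ τ in a..b, f τ) + I b := by rw [hI]; simp only; rw [hsplit]
    linarith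
  -- the inner expression
  have hinner : ∀ y, t y = (γ + 1) / 2 * Real.sqrt (1 - A * Real.exp (-((γ - 1) * g * I y)))
      - (γ - 1) / 2 := fun y => ht y
  have hE : ∀ y ∈ Set.Icc (0:ℝ) 1, Real.exp (-((γ - 1) * g * I y)) ≤ 1 := by
    intro y hy
    rw [Real.exp_le_one_iff]
    have h1 := hInonneg y hy
    have h2 : 0 ≤ (γ - 1) * g * I y := mul_nonneg (mul_nonneg hγ1.le hg.le) h1
    linarith
  have hEpos : ∀ y : ℝ, 0 < Real.exp (-((γ - 1) * g * I y)) := fun y => Real.exp_pos _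
  have hinner_lb : ∀ y ∈ Set.Icc (0:ℝ) 1,
      B ^ 2 ≤ 1 - A * Real.exp (-((γ - 1) * g * I y)) := by
    intro y hy
    have h1 := hE y hy
    have h2 := (hEpos y).le
    nlinarith
  have hinner_ub : ∀ y : ℝ, 1 - A * Real.exp (-((γ - 1) * g * I y)) < 1 := by
    intro y
    have := hEpos y
    nlinarith
  -- bounds
  have hbounds : ∀ y ∈ Set.Icc (0:ℝ) 1, t₁ ≤ t y ∧ t y < 1 := by
    intro y hy
    have hlb := hinner_lb y hy
    have hub := hinner_ub y
    have hs1 : B ≤ Real.sqrt (1 - A * Real.exp (-((γ - 1) * g * I y))) := by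
      calc B = Real.sqrt (B ^ 2) := by rw [Real.sqrt_sq hB0.le]
        _ ≤ _ := Real.sqrt_le_sqrt hlb
    have hs2 : Real.sqrt (1 - A * Real.exp (-((γ - 1) * g * I y))) < 1 := by
      calc Real.sqrt (1 - A * Real.exp (-((γ - 1) * g * I y))) < Real.sqrt 1 :=
            Real.sqrt_lt_sqrt (by nlinarith) hub
        _ = 1 := Real.sqrt_one
    rw [hinner y]
    constructor
    · have h4 : B * (γ + 1) = γ - 1 + 2 * t₁ := div_mul_cancel₀ _ hγ2.ne'
      nlinarith [hs1, mul_le_mul_of_nonneg_left hs1 (by linarith : (0:ℝ) ≤ (γ + 1) / 2)]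
    · nlinarith
  have hanti : StrictAntiOn t (Set.Icc 0 1) := by
    intro a ha b hb hab
    have hIab := hIanti a ha b hb hab
    have hexp : Real.exp (-((γ - 1) * g * I a)) < Real.exp (-((γ - 1) * g * I b)) := by
      apply Real.exp_lt_exp.mpr
      have h := mul_lt_mul_of_pos_left hIab (mul_pos hγ1 hg)
      nlinarith [h]
    have hlb := hinner_lb b hb
    have hs : Real.sqrt (1 - A * Real.exp (-((γ - 1) * g * I b))) <
        Real.sqrt (1 - A * Real.exp (-((γ - 1) * g * I a))) := by
      apply Real.sqrt_lt_sqrt (le_trans (sq_nonneg B) hlb)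
      have h := mul_lt_mul_of_pos_left hexp hA0
      linarith
    rw [hinner a, hinner b]
    nlinarith [hs]
  refine ⟨fun y hy => ⟨lt_of_lt_of_le ht₁0 (hbounds y hy).1, (hbounds y hy).2⟩, hanti, ?_⟩
  intro y hy
  have hy' : y ∈ Set.Icc (0:ℝ) 1 := ⟨hy.1, hy.2.le⟩
  have ht1 : t 1 = t₁ := by
    have hI1 : I 1 = 0 := intervalIntegral.integral_same
    rw [hinner 1, hI1]
    simp only [mul_zero, neg_zero, Real.exp_zero, mul_one]
    rw [hBeq]
    have : (1:ℝ) - (1 - B ^ 2) = B ^ 2 := by ring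
    rw [this, Real.sqrt_sq hB0.le]
    have h4 : B * (γ + 1) = γ - 1 + 2 * t₁ := div_mul_cancel₀ _ hγ2.ne'
    linear_combination h4 / 2
  have h2 := hanti hy' h11 hy.2
  rw [ht1] at h2
  exact h2
end

section
/- Let γ > 1, g > 0, t₁ ∈ (0,1), p₁ > 0, and let q : [0,1] → ℝ be continuous with q(y) > 0 for all y ∈ [0,1]. Then there exist differentiable functions t, p : [0,1] → ℝ such that t(1) = t₁, p(1) = p₁, 0 < t(y) < 1 and p(y) > 0 for all y ∈ [0,1], and for every y ∈ [0,1] (with one-sided derivatives at the endpoints): t'(y) = −(g/q(y)²)·((γ−1)/4)·(1 − γ − 2t(y) + (γ+1)²/(γ−1+2t(y))) and p'(y) = −γ·g·p(y)/(t(y)·q(y)²). -/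
open Real Set

/-!
Writing `w = γ - 1 + 2t`, the quantity `F(t) = (1 - t)(γ + t)` has `dF/dt = -w`, so the `t`-equation
becomes the linear equation `F(t)' = (γ - 1) (g / q²) F(t)`. Hence
`F(t(y)) = F(t₁) exp((γ - 1) ∫₁ʸ g / q²)`, which lies in `(0, F(t₁)] ⊆ (0, γ)` for `y ≤ 1`, and
inverting `F` on `t > (1 - γ)/2` gives `t` with values in `(0, 1)`. The pressure equation is linear
in `p` with a coefficient that is continuous once `t > 0` is known, so `p = p₁ exp(-∫₁ʸ γg/(tq²))`.
-/

section LinearODE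

variable {a b x₀ y : ℝ} {f : ℝ → ℝ}

theorem ContinuousOn.hasDerivWithinAt_integral_Icc (hf : ContinuousOn f (Icc a b))
    (hx₀ : x₀ ∈ Icc a b) (hy : y ∈ Icc a b) :
    HasDerivWithinAt (fun u => ∫ s in x₀..u, f s) (f y) (Icc a b) y :=
  have : Fact (y ∈ Icc a b) := ⟨hy⟩
  intervalIntegral.integral_hasDerivWithinAt_right
    ((hf.mono (uIcc_subset_Icc hx₀ hy)).intervalIntegrable)
    (hf.stronglyMeasurableAtFilter_nhdsWithin measurableSet_Icc y) (hf y hy)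

theorem ContinuousOn.hasDerivWithinAt_mul_exp_integral (hf : ContinuousOn f (Icc a b))
    (hx₀ : x₀ ∈ Icc a b) (hy : y ∈ Icc a b) (c : ℝ) :
    HasDerivWithinAt (fun u => c * exp (∫ s in x₀..u, f s))
      (f y * (c * exp (∫ s in x₀..y, f s))) (Icc a b) y :=
  ((hf.hasDerivWithinAt_integral_Icc hx₀ hy).exp.const_mul c).congr_deriv (by ring)

theorem integral_nonpos_of_ge_of_nonneg (hy : y ≤ x₀) (hf : ∀ s ∈ Icc y x₀, 0 ≤ f s) :
    ∫ s in x₀..y, f s ≤ 0 := by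
  rw [intervalIntegral.integral_symm, neg_nonpos]
  exact intervalIntegral.integral_nonneg hy hf

end LinearODE

section MachInverse

variable {γ : ℝ}

/-- The inverse of `t ↦ (1 - t) * (γ + t)` on `t ≥ (1 - γ) / 2`. -/
noncomputable def machInv (γ e : ℝ) : ℝ := (√((γ + 1) ^ 2 - 4 * e) - (γ - 1)) / 2

theorem machInv_one_sub_mul_add {t : ℝ} (ht : 1 - γ ≤ 2 * t) :
    machInv γ ((1 - t) * (γ + t)) = t := by
  have hsq : (γ + 1) ^ 2 - 4 * ((1 - t) * (γ + t)) = (γ - 1 + 2 * t) ^ 2 := by ring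
  rw [machInv, hsq, sqrt_sq (by linarith)]
  ring

theorem sqrt_eq_sub_one_add_two_mul_machInv (e : ℝ) :
    √((γ + 1) ^ 2 - 4 * e) = γ - 1 + 2 * machInv γ e := by
  rw [machInv]; ring

theorem one_sub_machInv_mul_add_machInv {e : ℝ} (he : 4 * e ≤ (γ + 1) ^ 2) :
    (1 - machInv γ e) * (γ + machInv γ e) = e := by
  have hsq := sq_sqrt (sub_nonneg.2 he)
  rw [sqrt_eq_sub_one_add_two_mul_machInv] at hsq
  linear_combination -hsq / 4

theorem machInv_mem_Ioo (hγ : 1 < γ) {e : ℝ} (he₀ : 0 < e) (he : e < γ) :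
    machInv γ e ∈ Ioo 0 1 := by
  have hlow : γ - 1 < √((γ + 1) ^ 2 - 4 * e) :=
    (lt_sqrt (by linarith)).2 (by nlinarith)
  have hup : √((γ + 1) ^ 2 - 4 * e) < γ + 1 := (sqrt_lt' (by linarith)).2 (by linarith)
  constructor <;> rw [machInv] <;> linarith

theorem HasDerivWithinAt.machInv {e : ℝ → ℝ} {e' y : ℝ} {s : Set ℝ}
    (he : HasDerivWithinAt e e' s y) (hey : 4 * e y < (γ + 1) ^ 2) :
    HasDerivWithinAt (fun u => machInv γ (e u)) (-e' / (γ - 1 + 2 * machInv γ (e y))) s y := by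
  have hsqrt := ((he.const_mul 4).const_sub ((γ + 1) ^ 2)).sqrt (by linarith)
  refine ((hsqrt.sub_const (γ - 1)).div_const 2).congr_deriv ?_
  rw [← sqrt_eq_sub_one_add_two_mul_machInv]
  have : √((γ + 1) ^ 2 - 4 * e y) ≠ 0 := (sqrt_pos.2 (by linarith)).ne'
  field_simp
  ring

end MachInverse

theorem exists_mach_ode_solution {a b γ t₁ : ℝ} {h : ℝ → ℝ} (hab : a ≤ b) (hγ : 1 < γ)
    (ht₁ : t₁ ∈ Ioo 0 1) (hh : ContinuousOn h (Icc a b)) (hh₀ : ∀ y ∈ Icc a b, 0 ≤ h y) :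
    ∃ t : ℝ → ℝ, t b = t₁ ∧ ∀ y ∈ Icc a b, t y ∈ Ioo 0 1 ∧
      HasDerivWithinAt t
        (-h y * ((γ - 1) / 4) * (1 - γ - 2 * t y + (γ + 1) ^ 2 / (γ - 1 + 2 * t y)))
        (Icc a b) y := by
  obtain ⟨ht₁0, ht₁1⟩ := ht₁
  have hb : b ∈ Icc a b := right_mem_Icc.2 hab
  have hf : ContinuousOn (fun s => (γ - 1) * h s) (Icc a b) := continuousOn_const.mul hh
  set e : ℝ → ℝ := fun u => (1 - t₁) * (γ + t₁) * exp (∫ s in b..u, (γ - 1) * h s)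
  have he : ∀ y ∈ Icc a b, 0 < e y ∧ e y < γ := fun y hy => by
    have hexp : exp (∫ s in b..y, (γ - 1) * h s) ≤ 1 :=
      exp_le_one_iff.2 <| integral_nonpos_of_ge_of_nonneg hy.2 fun s hs =>
        mul_nonneg (by linarith) (hh₀ s ⟨hy.1.trans hs.1, hs.2⟩)
    have hF : 0 < (1 - t₁) * (γ + t₁) := by nlinarith
    exact ⟨by positivity, by nlinarith [exp_pos (∫ s in b..y, (γ - 1) * h s)]⟩
  refine ⟨fun u => machInv γ (e u), ?_, fun y hy => ⟨machInv_mem_Ioo hγ (he y hy).1 (he y hy).2, ?_⟩⟩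
  · simp only [e, intervalIntegral.integral_same, exp_zero, mul_one]
    exact machInv_one_sub_mul_add (by linarith)
  · have hey : 4 * e y < (γ + 1) ^ 2 := by nlinarith [(he y hy).2]
    have hde : HasDerivWithinAt e ((γ - 1) * h y * e y) (Icc a b) y :=
      hf.hasDerivWithinAt_mul_exp_integral hb hy _
    refine (hde.machInv hey).congr_deriv ?_
    have hT₀ := (machInv_mem_Ioo hγ (he y hy).1 (he y hy).2).1
    have hF := one_sub_machInv_mul_add_machInv hey.le
    beta_reduce
    generalize machInv γ (e y) = T at hT₀ hF ⊢
    have hw : γ - 1 + 2 * T ≠ 0 := by linarith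
    have hsum : 1 - γ - 2 * T + (γ + 1) ^ 2 / (γ - 1 + 2 * T) =
        4 * ((1 - T) * (γ + T)) / (γ - 1 + 2 * T) := by
      rw [eq_div_iff hw, add_mul, div_mul_cancel₀ _ hw]
      ring
    rw [hsum, ← hF]
    ring

/-- Existence of the special normal shock ODE system solution: there exist
`t, p : [0,1] → ℝ` with `t(1) = t₁`, `p(1) = p₁`, `0 < t < 1`, `p > 0`, solving
`t' = −(g/q²)·((γ−1)/4)·(1 − γ − 2t + (γ+1)²/(γ−1+2t))` and
`p' = −γgp/(tq²)` on `[0,1]` (one-sided derivatives at the endpoints). -/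
theorem special_shock_ode_existence
    (γ g t₁ p₁ : ℝ) (q : ℝ → ℝ) (hγ : 1 < γ) (hg : 0 < g)
    (ht₁ : t₁ ∈ Set.Ioo (0 : ℝ) 1) (hp₁ : 0 < p₁)
    (hqc : ContinuousOn q (Set.Icc 0 1))
    (hqpos : ∀ y ∈ Set.Icc (0 : ℝ) 1, 0 < q y) :
    ∃ t p : ℝ → ℝ,
      t 1 = t₁ ∧ p 1 = p₁ ∧
      (∀ y ∈ Set.Icc (0 : ℝ) 1, 0 < t y ∧ t y < 1 ∧ 0 < p y) ∧
      (∀ y ∈ Set.Icc (0 : ℝ) 1,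
        HasDerivWithinAt t
          (-(g / q y ^ 2) * ((γ - 1) / 4) *
            (1 - γ - 2 * t y + (γ + 1) ^ 2 / (γ - 1 + 2 * t y)))
          (Set.Icc 0 1) y ∧
        HasDerivWithinAt p (-(γ * g * p y / (t y * q y ^ 2))) (Set.Icc 0 1) y) := by
  have h1 : (1 : ℝ) ∈ Icc 0 1 := right_mem_Icc.2 zero_le_one
  have hq2 : ∀ y ∈ Icc (0 : ℝ) 1, 0 < q y ^ 2 := fun y hy => pow_pos (hqpos y hy) 2
  obtain ⟨t, ht1, ht⟩ := exists_mach_ode_solution (h := fun y => g / q y ^ 2) zero_le_one hγ ht₁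
    (continuousOn_const.div (hqc.pow 2) fun y hy => (hq2 y hy).ne')
    fun y hy => (div_pos hg (hq2 y hy)).le
  set G : ℝ → ℝ := fun y => -(γ * g / (t y * q y ^ 2))
  have hG : ContinuousOn G (Icc 0 1) := by
    have htc : ContinuousOn t (Icc 0 1) := fun y hy => (ht y hy).2.continuousWithinAt
    exact (continuousOn_const.div (htc.mul (hqc.pow 2))
      fun y hy => (mul_pos (ht y hy).1.1 (hq2 y hy)).ne').neg
  refine ⟨t, fun y => p₁ * exp (∫ s in (1 : ℝ)..y, G s), ht1, by simp,
    fun y hy => ⟨(ht y hy).1.1, (ht y hy).1.2, by positivity⟩,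
    fun y hy => ⟨(ht y hy).2, ?_⟩⟩
  refine (hG.hasDerivWithinAt_mul_exp_integral h1 hy p₁).congr_deriv ?_
  simp only [G]
  ring
end

section
/- Let γ > 1, let g and Q > 0 be real numbers, let y₀ ∈ ℝ, and let p, t : ℝ → ℝ be differentiable at y₀ with p(y₀) > 0 and t(y₀) > 0. Set ρ₀ := γ·p(y₀)/(t(y₀)·Q²), define p⁺(y) := (2γ/(γ+1))·p(y)/t(y) − ((γ−1)/(γ+1))·p(y), and set ρ⁺₀ := (γ+1)·ρ₀/(γ−1+2t(y₀)). Assume p'(y₀) = −ρ₀·g. Then the following are equivalent: (i) p⁺ is differentiable at y₀ with (p⁺)'(y₀) = −ρ⁺₀·g; (ii) t'(y₀) = −(g/Q²)·((γ−1)/4)·(1 − γ − 2t(y₀) + (γ+1)²/(γ−1+2t(y₀))). -/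
/-!
Write `p⁺ = p · (a/t − b)` with `a = 2γ/(γ+1)`, `b = (γ−1)/(γ+1)`. By the quotient rule
`(p⁺)' = p'(a/t − b) − a p t'/t²`, and once the upstream hydrostatic law `p' = −ρ₀ g` is
substituted, the downstream law `(p⁺)' = −ρ⁺₀ g` becomes a linear equation in `t'` whose
coefficient `−a p/t²` does not vanish. Solving it gives the Mach-number ODE. Since
`ρ₀ g = γ p (g/Q²)/t`, the speed `Q` enters only through `g/Q²`.
-/

theorem HasDerivAt.const_mul_div_sub_const_mul {p t : ℝ → ℝ} {p' t' y₀ : ℝ} (a b : ℝ)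
    (hp : HasDerivAt p p' y₀) (ht : HasDerivAt t t' y₀) (ht0 : t y₀ ≠ 0) :
    HasDerivAt (fun y => a * p y / t y - b * p y)
      ((a * p' * t y₀ - a * p y₀ * t') / t y₀ ^ 2 - b * p') y₀ :=
  ((hp.const_mul a).div ht ht0).sub (hp.const_mul b)

theorem downstream_pressure_deriv_eq_iff {γ k p t p' t' : ℝ} (hγ : 1 < γ) (ht : 0 < t)
    (hp : p ≠ 0) (hp' : p' = -(γ * p * k / t)) :
    (2 * γ / (γ + 1) * p' * t - 2 * γ / (γ + 1) * p * t') / t ^ 2 - (γ - 1) / (γ + 1) * p'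
        = -((γ + 1) * (γ * p * k / t) / (γ - 1 + 2 * t))
      ↔ t' = -k * ((γ - 1) / 4) * (1 - γ - 2 * t + (γ + 1) ^ 2 / (γ - 1 + 2 * t)) := by
  have hs : γ - 1 + 2 * t ≠ 0 := by linarith
  have hγ0 : γ ≠ 0 := by linarith
  have hγ1 : γ + 1 ≠ 0 := by linarith
  subst hp'
  field_simp
  constructor <;> intro h
  · linear_combination -2 * h
  · linear_combination -h / 2

theorem downstream_hydrostatic_iff_mach_ode_general
    (γ g Q y₀ : ℝ) (p t : ℝ → ℝ) (hγ : 1 < γ)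
    (hpd : DifferentiableAt ℝ p y₀) (htd : DifferentiableAt ℝ t y₀)
    (hp0 : 0 < p y₀) (ht0 : 0 < t y₀)
    (hp' : deriv p y₀ = -(γ * p y₀ / (t y₀ * Q ^ 2)) * g) :
    HasDerivAt (fun y => 2 * γ / (γ + 1) * p y / t y - (γ - 1) / (γ + 1) * p y)
        (-((γ + 1) * (γ * p y₀ / (t y₀ * Q ^ 2)) / (γ - 1 + 2 * t y₀)) * g) y₀
      ↔ deriv t y₀ =
          -(g / Q ^ 2) * ((γ - 1) / 4) *
            (1 - γ - 2 * t y₀ + (γ + 1) ^ 2 / (γ - 1 + 2 * t y₀)) := by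
  have hD := hpd.hasDerivAt.const_mul_div_sub_const_mul (2 * γ / (γ + 1)) ((γ - 1) / (γ + 1))
    htd.hasDerivAt ht0.ne'
  have hρup : γ * p y₀ / (t y₀ * Q ^ 2) * g = γ * p y₀ * (g / Q ^ 2) / t y₀ := by ring
  have hρdown : -((γ + 1) * (γ * p y₀ / (t y₀ * Q ^ 2)) / (γ - 1 + 2 * t y₀)) * g
      = -((γ + 1) * (γ * p y₀ * (g / Q ^ 2) / t y₀) / (γ - 1 + 2 * t y₀)) := by
    rw [← hρup]; ring
  have hp'_scaled : deriv p y₀ = -(γ * p y₀ * (g / Q ^ 2) / t y₀) := by rw [hp', neg_mul, hρup]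
  rw [hρdown, ← downstream_pressure_deriv_eq_iff hγ ht0 hp0.ne' hp'_scaled]
  exact ⟨hD.unique, fun hderiv => hderiv ▸ hD⟩

/-- Equivalence of the downstream hydrostatic equation and the Mach-number ODE:
with `ρ₀ = γp(y₀)/(t(y₀)Q²)`, `p⁺ = (2γ/(γ+1))p/t − ((γ−1)/(γ+1))p`,
`ρ⁺₀ = (γ+1)ρ₀/(γ−1+2t(y₀))`, and assuming `p'(y₀) = −ρ₀g`, we have:
`p⁺` is differentiable at `y₀` with `(p⁺)'(y₀) = −ρ⁺₀g` iff
`t'(y₀) = −(g/Q²)·((γ−1)/4)·(1 − γ − 2t(y₀) + (γ+1)²/(γ−1+2t(y₀)))`. -/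
theorem downstream_hydrostatic_iff_mach_ode
    (γ g Q y₀ : ℝ) (p t : ℝ → ℝ) (hγ : 1 < γ) (hQ : 0 < Q)
    (hpd : DifferentiableAt ℝ p y₀) (htd : DifferentiableAt ℝ t y₀)
    (hp0 : 0 < p y₀) (ht0 : 0 < t y₀)
    (hp' : deriv p y₀ = -(γ * p y₀ / (t y₀ * Q ^ 2)) * g) :
    HasDerivAt (fun y => 2 * γ / (γ + 1) * p y / t y - (γ - 1) / (γ + 1) * p y)
        (-((γ + 1) * (γ * p y₀ / (t y₀ * Q ^ 2)) / (γ - 1 + 2 * t y₀)) * g) y₀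
      ↔ deriv t y₀ =
          -(g / Q ^ 2) * ((γ - 1) / 4) *
            (1 - γ - 2 * t y₀ + (γ + 1) ^ 2 / (γ - 1 + 2 * t y₀)) :=
  downstream_hydrostatic_iff_mach_ode_general γ g Q y₀ p t hγ hpd htd hp0 ht0 hp'
end

section
/- Let γ > 1, let g and Q > 0 be real numbers, let y₀ ∈ ℝ, and let p, t : ℝ → ℝ be differentiable at y₀ with p(y₀) > 0 and t(y₀) > 0. Set ρ₀ := γ·p(y₀)/(t(y₀)·Q²), define p⁺(y) := (2γ/(γ+1))·p(y)/t(y) − ((γ−1)/(γ+1))·p(y), and set ρ⁺₀ := (γ+1)·ρ₀/(γ−1+2t(y₀)). Assume p'(y₀) = −ρ₀·g and (p⁺)'(y₀) = −ρ⁺₀·g. Then the function y ↦ γ·p(y)/t(y) is differentiable at y₀ with derivative −((γ−1)/2)·(1 + ((γ+1)²/(γ−1)²)·1/(1 + 2t(y₀)/(γ−1)))·ρ₀·g. -/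
/-!
Writing `u = p/t`, the Rankine–Hugoniot pressure is `p⁺ = a u − b p` with `a = 2γ/(γ+1)` and
`b = (γ−1)/(γ+1)`, so `u' = ((p⁺)' + b p')/a`. Substituting the two hydrostatic laws gives
`(γu)' = −(ρ₀g/2)((γ−1) + (γ+1)²/(γ−1+2t))`, which is the stated formula after factoring out `γ−1`.
-/

theorem hasDerivAt_div_of_deriv_mul_div_sub_mul {𝕜 : Type*} [NontriviallyNormedField 𝕜]
    {p t : 𝕜 → 𝕜} {x a b : 𝕜} (ha : a ≠ 0) (hp : DifferentiableAt 𝕜 p x)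
    (ht : DifferentiableAt 𝕜 t x) (htx : t x ≠ 0) :
    HasDerivAt (fun y => p y / t y)
      ((deriv (fun y => a * p y / t y - b * p y) x + b * deriv p x) / a) x := by
  set u' := deriv (fun y => p y / t y) x
  have hu : HasDerivAt (fun y => p y / t y) u' x := (hp.fun_div ht htx).hasDerivAt
  have hf : HasDerivAt (fun y => a * p y / t y - b * p y) (a * u' - b * deriv p x) x := by
    simpa only [mul_div_assoc] using (hu.const_mul a).fun_sub (hp.hasDerivAt.const_mul b)
  rw [hf.deriv]
  convert hu using 1
  field_simp
  ring

theorem momentum_slope_eq {γ t ρ g : ℝ} (hγ : γ ≠ 0) (hγp : γ + 1 ≠ 0) (hγm : γ - 1 ≠ 0)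
    (hden : γ - 1 + 2 * t ≠ 0) :
    γ * ((-((γ + 1) * ρ / (γ - 1 + 2 * t)) * g + (γ - 1) / (γ + 1) * (-ρ * g))
        / (2 * γ / (γ + 1)))
      = -((γ - 1) / 2) * (1 + (γ + 1) ^ 2 / (γ - 1) ^ 2 * (1 / (1 + 2 * t / (γ - 1)))) * ρ * g := by
  have hden' : γ - 1 + 2 * t = (γ - 1) * (1 + 2 * t / (γ - 1)) := by field_simp
  have hfac : 1 + 2 * t / (γ - 1) ≠ 0 := by
    rintro h
    exact hden (by rw [hden', h, mul_zero])
  field_simp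
  rw [hden']
  field_simp
  ring

theorem momentum_derivative_formula_general
    (γ g Q y₀ : ℝ) (p t : ℝ → ℝ) (hγ : 1 < γ)
    (hpd : DifferentiableAt ℝ p y₀) (htd : DifferentiableAt ℝ t y₀)
    (ht0 : 0 < t y₀)
    (hp' : deriv p y₀ = -(γ * p y₀ / (t y₀ * Q ^ 2)) * g)
    (hpp' : deriv (fun y => 2 * γ / (γ + 1) * p y / t y - (γ - 1) / (γ + 1) * p y) y₀
      = -((γ + 1) * (γ * p y₀ / (t y₀ * Q ^ 2)) / (γ - 1 + 2 * t y₀)) * g) :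
    HasDerivAt (fun y => γ * p y / t y)
      (-((γ - 1) / 2) *
        (1 + (γ + 1) ^ 2 / (γ - 1) ^ 2 * (1 / (1 + 2 * t y₀ / (γ - 1)))) *
        (γ * p y₀ / (t y₀ * Q ^ 2)) * g) y₀ := by
  have hγ₀ : γ ≠ 0 := by linarith
  have hγp : γ + 1 ≠ 0 := by linarith
  have hγm : γ - 1 ≠ 0 := sub_ne_zero.mpr hγ.ne'
  have hden : γ - 1 + 2 * t y₀ ≠ 0 := by linarith
  have hu := hasDerivAt_div_of_deriv_mul_div_sub_mul (a := 2 * γ / (γ + 1))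
    (b := (γ - 1) / (γ + 1)) (div_ne_zero (by linarith) hγp) hpd htd ht0.ne'
  rw [hpp', hp'] at hu
  rw [← momentum_slope_eq hγ₀ hγp hγm hden]
  simpa only [mul_div_assoc] using hu.const_mul γ

/-- Formula for the derivative of the momentum quantity `ρ⁻q⁻² = γp/t`:
with `ρ₀ = γp(y₀)/(t(y₀)Q²)`, `p⁺ = (2γ/(γ+1))p/t − ((γ−1)/(γ+1))p`,
`ρ⁺₀ = (γ+1)ρ₀/(γ−1+2t(y₀))`, and assuming `p'(y₀) = −ρ₀g` and
`(p⁺)'(y₀) = −ρ⁺₀g`, one gets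
`(γp/t)'(y₀) = −((γ−1)/2)·(1 + ((γ+1)²/(γ−1)²)·1/(1 + 2t(y₀)/(γ−1)))·ρ₀g`. -/
theorem momentum_derivative_formula
    (γ g Q y₀ : ℝ) (p t : ℝ → ℝ) (hγ : 1 < γ) (hQ : 0 < Q)
    (hpd : DifferentiableAt ℝ p y₀) (htd : DifferentiableAt ℝ t y₀)
    (hp0 : 0 < p y₀) (ht0 : 0 < t y₀)
    (hp' : deriv p y₀ = -(γ * p y₀ / (t y₀ * Q ^ 2)) * g)
    (hpp' : deriv (fun y => 2 * γ / (γ + 1) * p y / t y - (γ - 1) / (γ + 1) * p y) y₀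
      = -((γ + 1) * (γ * p y₀ / (t y₀ * Q ^ 2)) / (γ - 1 + 2 * t y₀)) * g) :
    HasDerivAt (fun y => γ * p y / t y)
      (-((γ - 1) / 2) *
        (1 + (γ + 1) ^ 2 / (γ - 1) ^ 2 * (1 / (1 + 2 * t y₀ / (γ - 1)))) *
        (γ * p y₀ / (t y₀ * Q ^ 2)) * g) y₀ :=
  momentum_derivative_formula_general γ g Q y₀ p t hγ hpd htd ht0 hp' hpp'
end

section
/- Let γ > 1, c_v > 0, ρ > 0, q > 0, p > 0 be real numbers and let J be a nonzero real number. Set c² := γp/ρ and M² := ρq²/(γp). Define the 3×3 real matrix A := (J/(ρq)) · B, where B has rows (−1/(ρc²), −1/q, 1/(γc_v)), (1 − p/(ρc²), ρq − p/q, p/(γc_v)), and (q/J, ρq²/J, (p/((γ−1)c_v))·(q/J)). Then det A = (J²·p·(1 − M²))/((γ−1)·c_v·(ρq)³). In particular, if M² ≠ 1 then det A ≠ 0 and A is invertible. -/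
open Matrix

/-- Determinant of the linearized Rankine–Hugoniot coefficient matrix:
with `c² = γp/ρ`, `M² = ρq²/(γp)` and `A = (J/(ρq))·B` as in the paper,
`det A = J²p(1 − M²)/((γ−1)c_v(ρq)³)`; if `M² ≠ 1` then `det A ≠ 0`
and `A` is invertible. -/
theorem RH_matrix_det
    (γ cv ρ q p J : ℝ) (hγ : 1 < γ) (hcv : 0 < cv) (hρ : 0 < ρ) (hq : 0 < q)
    (hp : 0 < p) (hJ : J ≠ 0)
    (c2 M2 : ℝ) (hc2 : c2 = γ * p / ρ) (hM2 : M2 = ρ * q ^ 2 / (γ * p))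
    (A : Matrix (Fin 3) (Fin 3) ℝ)
    (hA : A = (J / (ρ * q)) •
      Matrix.of
        ![![-1 / (ρ * c2), -1 / q, 1 / (γ * cv)],
          ![1 - p / (ρ * c2), ρ * q - p / q, p / (γ * cv)],
          ![q / J, ρ * q ^ 2 / J, p / ((γ - 1) * cv) * (q / J)]]) :
    A.det = J ^ 2 * p * (1 - M2) / ((γ - 1) * cv * (ρ * q) ^ 3) ∧
      (M2 ≠ 1 → A.det ≠ 0 ∧ IsUnit A) := by
  have hγ0 : (0:ℝ) < γ := lt_trans one_pos hγ
  have hγ1 : γ - 1 ≠ 0 := sub_ne_zero.2 (ne_of_gt hγ)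
  have hρ0 := hρ.ne'
  have hq0 := hq.ne'
  have hp0 := hp.ne'
  have hcv0 := hcv.ne'
  have hdet : A.det = J ^ 2 * p * (1 - M2) / ((γ - 1) * cv * (ρ * q) ^ 3) := by
    subst hA hc2 hM2
    rw [Matrix.det_smul, Matrix.det_fin_three]
    simp only [Matrix.of_apply, Matrix.cons_val', Matrix.cons_val_zero, Matrix.cons_val_one,
      Matrix.head_cons, Matrix.empty_val', Matrix.cons_val_fin_one, Matrix.head_fin_const,
      Matrix.cons_val_two, Matrix.tail_cons, Fintype.card_fin]
    field_simp
    ring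
  refine ⟨hdet, fun hM1 => ?_⟩
  have h1 : (1 : ℝ) - M2 ≠ 0 := sub_ne_zero.2 (Ne.symm hM1)
  have hdne : A.det ≠ 0 := by
    rw [hdet]
    apply div_ne_zero
    · exact mul_ne_zero (mul_ne_zero (pow_ne_zero 2 hJ) hp0) h1
    · exact mul_ne_zero (mul_ne_zero hγ1 hcv0) (pow_ne_zero 3 (mul_ne_zero hρ0 hq0))
  exact ⟨hdne, (Matrix.isUnit_iff_isUnit_det A).2 (isUnit_iff_ne_zero.2 hdne)⟩
end

section
/- Let L₀ > 0 and I > 0 be real numbers and let J : ℝ → ℝ be three times differentiable on [0, L₀], with J'(0) = 0, c := J''(0) > 0, |J'''(x)| ≤ I for all x ∈ [0, L₀], and L₀ < 2c/I. Then J'(x) > 0 for every x ∈ (0, L₀], and for every real v with J(0) < v < J(0) + (L₀²/6)·(3c − L₀·I) there exists a unique x₀ ∈ (0, L₀) such that J(x₀) = v. -/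
open Set

/-- Calculus core of Lemma 4.2: if `J` is three times differentiable on `[0,L₀]`,
`J'(0) = 0`, `J''(0) > 0`, `|J'''| ≤ I` on `[0,L₀]` and `L₀ < 2J''(0)/I`, then
`J' > 0` on `(0,L₀]` and every value `v` with
`J(0) < v < J(0) + (L₀²/6)(3J''(0) − L₀I)` is attained exactly once in `(0,L₀)`. -/
theorem shock_position_lemma_pos
    (L₀ I : ℝ) (J J' J'' J''' : ℝ → ℝ) (hL₀ : 0 < L₀) (hI : 0 < I)
    (hd1 : ∀ x ∈ Set.Icc 0 L₀, HasDerivWithinAt J (J' x) (Set.Icc 0 L₀) x)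
    (hd2 : ∀ x ∈ Set.Icc 0 L₀, HasDerivWithinAt J' (J'' x) (Set.Icc 0 L₀) x)
    (hd3 : ∀ x ∈ Set.Icc 0 L₀, HasDerivWithinAt J'' (J''' x) (Set.Icc 0 L₀) x)
    (h0 : J' 0 = 0) (hc : 0 < J'' 0)
    (hIb : ∀ x ∈ Set.Icc 0 L₀, |J''' x| ≤ I)
    (hL : L₀ < 2 * J'' 0 / I) :
    (∀ x ∈ Set.Ioc 0 L₀, 0 < J' x) ∧
      ∀ v : ℝ, J 0 < v → v < J 0 + L₀ ^ 2 / 6 * (3 * J'' 0 - L₀ * I) →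
        ∃! x₀, x₀ ∈ Set.Ioo 0 L₀ ∧ J x₀ = v := by
  set c := J'' 0 with hcdef
  have hIL : I * L₀ < 2 * c := by
    rw [lt_div_iff₀ hI] at hL
    nlinarith [hL]
  have hconv : Convex ℝ (Set.Icc (0:ℝ) L₀) := convex_Icc 0 L₀
  have hint : interior (Set.Icc (0:ℝ) L₀) = Set.Ioo 0 L₀ := interior_Icc
  have h0mem : (0:ℝ) ∈ Set.Icc (0:ℝ) L₀ := ⟨le_refl 0, hL₀.le⟩
  -- Step 1: |J'' x - c| ≤ I * x
  have h2 : ∀ x ∈ Set.Icc (0:ℝ) L₀, c - I * x ≤ J'' x := by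
    intro x hx
    have := hconv.norm_image_sub_le_of_norm_hasDerivWithin_le hd3 hIb h0mem hx
    rw [Real.norm_eq_abs, Real.norm_eq_abs, sub_zero] at this
    have hxabs : |x| = x := abs_of_nonneg hx.1
    rw [hxabs] at this
    have := abs_le.mp this
    linarith [this.1]
  -- continuity of J, J', J''
  have hcJ : ContinuousOn J (Set.Icc 0 L₀) := fun x hx => (hd1 x hx).continuousWithinAt
  have hcJ' : ContinuousOn J' (Set.Icc 0 L₀) := fun x hx => (hd2 x hx).continuousWithinAt
  -- Step 2: J' x ≥ c x - I x²/2 on [0, L₀]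
  have hg : MonotoneOn (fun x => J' x - (c * x - I * x ^ 2 / 2)) (Set.Icc 0 L₀) := by
    apply monotoneOn_of_hasDerivWithinAt_nonneg hconv
      (f' := fun x => J'' x - (c - I * x))
    · exact hcJ'.sub (by fun_prop)
    · intro x hx
      rw [hint] at hx ⊢
      have := (hd2 x (Set.Ioo_subset_Icc_self hx)).mono Set.Ioo_subset_Icc_self
      exact this.sub (((hasDerivAt_id x).const_mul c |>.sub
        (((hasDerivAt_pow 2 x).const_mul I).div_const 2)).hasDerivWithinAt.congr_deriv
        (by ring))
    · intro x hx
      rw [hint] at hx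
      have := h2 x (Set.Ioo_subset_Icc_self hx)
      linarith
  have hJ'lb : ∀ x ∈ Set.Icc (0:ℝ) L₀, c * x - I * x ^ 2 / 2 ≤ J' x := by
    intro x hx
    have := hg h0mem hx hx.1
    simp only [h0] at this
    nlinarith [this]
  have hJ'pos : ∀ x ∈ Set.Ioc (0:ℝ) L₀, 0 < J' x := by
    intro x hx
    have hx' : x ∈ Set.Icc (0:ℝ) L₀ := ⟨hx.1.le, hx.2⟩
    have h1 := hJ'lb x hx'
    have h3 : I * x < 2 * c :=
      lt_of_le_of_lt (mul_le_mul_of_nonneg_left hx.2 hI.le) hIL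
    have : 0 < c * x - I * x ^ 2 / 2 := by nlinarith [hx.1, h3]
    linarith
  -- Step 3: J strictly monotone on [0, L₀]
  have hmono : StrictMonoOn J (Set.Icc 0 L₀) := by
    apply strictMonoOn_of_hasDerivWithinAt_pos hconv hcJ (f' := J')
    · intro x hx
      rw [hint] at hx ⊢
      exact (hd1 x (Set.Ioo_subset_Icc_self hx)).mono Set.Ioo_subset_Icc_self
    · intro x hx
      rw [hint] at hx
      exact hJ'pos x ⟨hx.1, hx.2.le⟩
  -- Step 4: lower bound on J L₀
  have hh : MonotoneOn (fun x => J x - (c * x ^ 2 / 2 - I * x ^ 3 / 6)) (Set.Icc 0 L₀) := by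
    apply monotoneOn_of_hasDerivWithinAt_nonneg hconv
      (f' := fun x => J' x - (c * x - I * x ^ 2 / 2))
    · exact hcJ.sub (by fun_prop)
    · intro x hx
      rw [hint] at hx ⊢
      have := (hd1 x (Set.Ioo_subset_Icc_self hx)).mono Set.Ioo_subset_Icc_self
      exact this.sub (((((hasDerivAt_pow 2 x).const_mul c).div_const 2).sub
        (((hasDerivAt_pow 3 x).const_mul I).div_const 6)).hasDerivWithinAt.congr_deriv
        (by ring))
    · intro x hx
      rw [hint] at hx
      have := hJ'lb x (Set.Ioo_subset_Icc_self hx)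
      linarith
  have hLmem : L₀ ∈ Set.Icc (0:ℝ) L₀ := ⟨hL₀.le, le_refl _⟩
  have hJL : J 0 + L₀ ^ 2 / 6 * (3 * c - L₀ * I) ≤ J L₀ := by
    have := hh h0mem hLmem hL₀.le
    simp only at this
    nlinarith [this]
  refine ⟨hJ'pos, fun v hv1 hv2 => ?_⟩
  have hvL : v < J L₀ := lt_of_lt_of_le hv2 hJL
  obtain ⟨x₀, hx₀, hJx₀⟩ := intermediate_value_Icc hL₀.le hcJ ⟨hv1.le, hvL.le⟩
  have hx₀0 : x₀ ≠ 0 := by rintro rfl; exact absurd hJx₀ (by linarith)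
  have hx₀L : x₀ ≠ L₀ := by rintro rfl; exact absurd hJx₀ (by linarith)
  refine ⟨x₀, ⟨⟨lt_of_le_of_ne hx₀.1 (Ne.symm hx₀0), lt_of_le_of_ne hx₀.2 hx₀L⟩, hJx₀⟩, ?_⟩
  rintro y ⟨hy, hJy⟩
  exact hmono.injOn ⟨hy.1.le, hy.2.le⟩ hx₀ (by rw [hJy, hJx₀])
end

section
/- Let L₀ > 0 and I > 0 be real numbers and let J : ℝ → ℝ be three times differentiable on [0, L₀], with J'(0) = 0, c := J''(0) < 0, |J'''(x)| ≤ I for all x ∈ [0, L₀], and L₀ < −2c/I. Then J'(x) < 0 for every x ∈ (0, L₀], and for every real v with J(0) + (L₀²/6)·(3c + L₀·I) < v < J(0) there exists a unique x₀ ∈ (0, L₀) such that J(x₀) = v. -/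
/-!
Integrating the bound `J''' ≤ I` three times from `0` gives
`J''(x) ≤ c + I x`, `J'(x) ≤ c x + I x²/2 = x (c + I x/2)` and
`J(L₀) ≤ J(0) + (L₀²/6)(3c + L₀ I)`, where `c = J''(0)`. Since `L₀ I < -2c`, the middle bound
makes `J'` negative on `(0, L₀]`, so `J` is strictly decreasing on `[0, L₀]`; the last bound puts
`v` strictly between `J(L₀)` and `J(0)`, and the intermediate value theorem together with strict
monotonicity gives exactly one preimage in `(0, L₀)`.
-/

open Set

theorem StrictAntiOn.existsUnique_mem_Ioo_eq {α δ : Type*} [ConditionallyCompleteLinearOrder α]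
    [TopologicalSpace α] [OrderTopology α] [DenselyOrdered α] [LinearOrder δ] [TopologicalSpace δ]
    [OrderClosedTopology δ] {f : α → δ} {a b : α} {v : δ} (hab : a ≤ b)
    (hf : StrictAntiOn f (Icc a b)) (hcont : ContinuousOn f (Icc a b)) (hb : f b < v)
    (ha : v < f a) : ∃! x, x ∈ Ioo a b ∧ f x = v := by
  obtain ⟨x, hx, rfl⟩ := intermediate_value_Ioo' hab hcont ⟨hb, ha⟩
  exact ⟨x, ⟨hx, rfl⟩, fun y ⟨hy, hfy⟩ ↦
    hf.injOn (Ioo_subset_Icc_self hy) (Ioo_subset_Icc_self hx) hfy⟩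

section DerivOnIcc

variable {a b : ℝ} {f f' g g' : ℝ → ℝ}

theorem hasDerivWithinAt_interior_Icc
    (hf : ∀ x ∈ Icc a b, HasDerivWithinAt f (f' x) (Icc a b) x) :
    ∀ x ∈ interior (Icc a b), HasDerivWithinAt f (f' x) (interior (Icc a b)) x := by
  rw [interior_Icc]
  exact fun x hx ↦ (hf x (Ioo_subset_Icc_self hx)).mono Ioo_subset_Icc_self

theorem strictAntiOn_Icc_of_hasDerivWithinAt_neg
    (hf : ∀ x ∈ Icc a b, HasDerivWithinAt f (f' x) (Icc a b) x)
    (hneg : ∀ x ∈ Ioo a b, f' x < 0) : StrictAntiOn f (Icc a b) :=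
  strictAntiOn_of_hasDerivWithinAt_neg (convex_Icc a b)
    (fun x hx ↦ (hf x hx).continuousWithinAt) (hasDerivWithinAt_interior_Icc hf)
    (by rwa [interior_Icc])

theorem sub_le_sub_of_hasDerivWithinAt_le
    (hf : ∀ x ∈ Icc a b, HasDerivWithinAt f (f' x) (Icc a b) x)
    (hg : ∀ x ∈ Icc a b, HasDerivWithinAt g (g' x) (Icc a b) x)
    (hle : ∀ x ∈ Ioo a b, f' x ≤ g' x) {x : ℝ} (hx : x ∈ Icc a b) :
    f x - f a ≤ g x - g a := by
  have hgf : ∀ y ∈ Icc a b, HasDerivWithinAt (g - f) (g' y - f' y) (Icc a b) y :=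
    fun y hy ↦ (hg y hy).sub (hf y hy)
  have hmono : MonotoneOn (g - f) (Icc a b) :=
    monotoneOn_of_hasDerivWithinAt_nonneg (convex_Icc a b)
      (fun y hy ↦ (hgf y hy).continuousWithinAt) (hasDerivWithinAt_interior_Icc hgf)
      (by rw [interior_Icc]; exact fun y hy ↦ sub_nonneg.2 (hle y hy))
  have := hmono ⟨le_rfl, hx.1.trans hx.2⟩ hx hx.1
  simp only [Pi.sub_apply] at this
  linarith

variable (hf : ∀ x ∈ Icc a b, HasDerivWithinAt f (f' x) (Icc a b) x) {x : ℝ} (hx : x ∈ Icc a b)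
include hf hx

theorem le_add_mul_of_hasDerivWithinAt_le {M : ℝ} (hle : ∀ y ∈ Ioo a b, f' y ≤ M) :
    f x ≤ f a + M * (x - a) := by
  have hg : ∀ y ∈ Icc a b, HasDerivWithinAt (fun y ↦ M * y) M (Icc a b) y :=
    fun y _ ↦ (hasDerivWithinAt_id y _).const_mul M |>.congr_deriv (mul_one M)
  have := sub_le_sub_of_hasDerivWithinAt_le hf hg hle hx
  linarith

theorem le_taylor_two_of_hasDerivWithinAt_le {c M : ℝ}
    (hle : ∀ y ∈ Ioo a b, f' y ≤ c + M * (y - a)) :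
    f x ≤ f a + c * (x - a) + M * (x - a) ^ 2 / 2 := by
  have hg : ∀ y ∈ Icc a b, HasDerivWithinAt (fun y ↦ c * (y - a) + M * (y - a) ^ 2 / 2)
      (c + M * (y - a)) (Icc a b) y := fun y _ ↦ by
    have h := (hasDerivAt_id y).sub_const a
    refine ((h.const_mul c).add ((h.pow 2).const_mul M |>.div_const 2)).hasDerivWithinAt
      |>.congr_deriv ?_
    simp only [id]
    ring
  have := sub_le_sub_of_hasDerivWithinAt_le hf hg hle hx
  simp only [sub_self, mul_zero, add_zero, ne_eq, OfNat.ofNat_ne_zero, not_false_eq_true,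
    zero_pow, zero_div, sub_zero] at this
  linarith

theorem le_taylor_three_of_hasDerivWithinAt_le {d c M : ℝ}
    (hle : ∀ y ∈ Ioo a b, f' y ≤ d + c * (y - a) + M * (y - a) ^ 2 / 2) :
    f x ≤ f a + d * (x - a) + c * (x - a) ^ 2 / 2 + M * (x - a) ^ 3 / 6 := by
  have hg : ∀ y ∈ Icc a b, HasDerivWithinAt
      (fun y ↦ d * (y - a) + c * (y - a) ^ 2 / 2 + M * (y - a) ^ 3 / 6)
      (d + c * (y - a) + M * (y - a) ^ 2 / 2) (Icc a b) y := fun y _ ↦ by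
    have h := (hasDerivAt_id y).sub_const a
    refine (((h.const_mul d).add ((h.pow 2).const_mul c |>.div_const 2)).add
      ((h.pow 3).const_mul M |>.div_const 6)).hasDerivWithinAt |>.congr_deriv ?_
    simp only [id]
    ring
  have := sub_le_sub_of_hasDerivWithinAt_le hf hg hle hx
  simp only [sub_self, mul_zero, add_zero, ne_eq, OfNat.ofNat_ne_zero, not_false_eq_true,
    zero_pow, zero_div, sub_zero] at this
  linarith

end DerivOnIcc

theorem shock_position_lemma_neg_general
    (L₀ I : ℝ) (J J' J'' J''' : ℝ → ℝ) (hL₀ : 0 < L₀) (hI : 0 < I)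
    (hd1 : ∀ x ∈ Set.Icc 0 L₀, HasDerivWithinAt J (J' x) (Set.Icc 0 L₀) x)
    (hd2 : ∀ x ∈ Set.Icc 0 L₀, HasDerivWithinAt J' (J'' x) (Set.Icc 0 L₀) x)
    (hd3 : ∀ x ∈ Set.Icc 0 L₀, HasDerivWithinAt J'' (J''' x) (Set.Icc 0 L₀) x)
    (h0 : J' 0 = 0)
    (hIb : ∀ x ∈ Set.Icc 0 L₀, |J''' x| ≤ I)
    (hL : L₀ < -(2 * J'' 0) / I) :
    (∀ x ∈ Set.Ioc 0 L₀, J' x < 0) ∧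
      ∀ v : ℝ, J 0 + L₀ ^ 2 / 6 * (3 * J'' 0 + L₀ * I) < v → v < J 0 →
        ∃! x₀, x₀ ∈ Set.Ioo 0 L₀ ∧ J x₀ = v := by
  have hLI : L₀ * I < -(2 * J'' 0) := (lt_div_iff₀ hI).1 hL
  have hJ'' : ∀ x ∈ Icc 0 L₀, J'' x ≤ J'' 0 + I * (x - 0) := fun x hx ↦
    le_add_mul_of_hasDerivWithinAt_le hd3 hx fun y hy ↦
      (abs_le.1 (hIb y (Ioo_subset_Icc_self hy))).2
  have hJ' : ∀ x ∈ Icc 0 L₀, J' x ≤ J' 0 + J'' 0 * (x - 0) + I * (x - 0) ^ 2 / 2 :=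
    fun x hx ↦ le_taylor_two_of_hasDerivWithinAt_le hd2 hx fun y hy ↦
      hJ'' y (Ioo_subset_Icc_self hy)
  have hJ : J L₀ ≤ J 0 + J' 0 * (L₀ - 0) + J'' 0 * (L₀ - 0) ^ 2 / 2 + I * (L₀ - 0) ^ 3 / 6 :=
    le_taylor_three_of_hasDerivWithinAt_le hd1 (right_mem_Icc.2 hL₀.le) fun y hy ↦
      hJ' y (Ioo_subset_Icc_self hy)
  have hneg : ∀ x ∈ Ioc 0 L₀, J' x < 0 := by
    intro x ⟨hx0, hxL⟩
    have hfactor : J' x ≤ x * (J'' 0 + I * x / 2) := by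
      have := hJ' x ⟨hx0.le, hxL⟩
      rw [h0] at this
      linarith
    have hslope : J'' 0 + I * x / 2 < 0 := by nlinarith
    linarith [mul_neg_of_pos_of_neg hx0 hslope]
  refine ⟨hneg, fun v hv hv' ↦ ?_⟩
  refine StrictAntiOn.existsUnique_mem_Ioo_eq hL₀.le
    (strictAntiOn_Icc_of_hasDerivWithinAt_neg hd1 fun x hx ↦ hneg x (Ioo_subset_Ioc_self hx))
    (fun x hx ↦ (hd1 x hx).continuousWithinAt) ?_ hv'
  rw [h0] at hJ
  linarith

/-- Calculus core of Lemma 4.3: if `J` is three times differentiable on `[0,L₀]`,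
`J'(0) = 0`, `J''(0) < 0`, `|J'''| ≤ I` on `[0,L₀]` and `L₀ < −2J''(0)/I`, then
`J' < 0` on `(0,L₀]` and every value `v` with
`J(0) + (L₀²/6)(3J''(0) + L₀I) < v < J(0)` is attained exactly once in `(0,L₀)`. -/
theorem shock_position_lemma_neg
    (L₀ I : ℝ) (J J' J'' J''' : ℝ → ℝ) (hL₀ : 0 < L₀) (hI : 0 < I)
    (hd1 : ∀ x ∈ Set.Icc 0 L₀, HasDerivWithinAt J (J' x) (Set.Icc 0 L₀) x)
    (hd2 : ∀ x ∈ Set.Icc 0 L₀, HasDerivWithinAt J' (J'' x) (Set.Icc 0 L₀) x)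
    (hd3 : ∀ x ∈ Set.Icc 0 L₀, HasDerivWithinAt J'' (J''' x) (Set.Icc 0 L₀) x)
    (h0 : J' 0 = 0) (hc : J'' 0 < 0)
    (hIb : ∀ x ∈ Set.Icc 0 L₀, |J''' x| ≤ I)
    (hL : L₀ < -(2 * J'' 0) / I) :
    (∀ x ∈ Set.Ioc 0 L₀, J' x < 0) ∧
      ∀ v : ℝ, J 0 + L₀ ^ 2 / 6 * (3 * J'' 0 + L₀ * I) < v → v < J 0 →
        ∃! x₀, x₀ ∈ Set.Ioo 0 L₀ ∧ J x₀ = v :=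
  shock_position_lemma_neg_general L₀ I J J' J'' J''' hL₀ hI hd1 hd2 hd3 h0 hIb hL
end

section
/- Let γ > 1, let g be a real number, t₁ ∈ (0,1), and let q : [0,1] → ℝ be continuous with q(y) > 0 for all y ∈ [0,1]. Set μ² := (γ−1)/(γ+1). Suppose t : [0,1] → ℝ is differentiable on [0,1] with t(y) > 0 for all y, t(1) = t₁, and t'(y) = −(g/q(y)²)·((γ−1)/4)·(1 − γ − 2t(y) + (γ+1)²/(γ−1+2t(y))) for every y ∈ [0,1]. Then for every y ∈ [0,1], t(y) = ((γ+1)/2)·√(1 − (1 − μ⁴(1 + 2t₁/(γ−1))²)·exp(−(γ−1)·g·∫_y^1 q(τ)⁻² dτ)) − (γ−1)/2. -/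
open Real Set

/-!
With `s = γ - 1 + 2t`, the right-hand side of the ODE is `-(γ - 1) g ((γ + 1)² - s²) / (4 q² s)`,
so the defect `v = (γ + 1)² - s²` obeys the linear equation `v' = (γ - 1) g q⁻² v`. Hence
`v(y) = v(1) exp(-(γ - 1) g ∫_y^1 q⁻²)`, and since `s > 0` this can be solved for `t(y)`.
-/

section LinearODE

variable {a b : ℝ} {c v : ℝ → ℝ}

theorem hasDerivWithinAt_primitive_Ici_of_continuousOn (hc : ContinuousOn c (Icc a b)) {x : ℝ}
    (hx : x ∈ Ico a b) : HasDerivWithinAt (fun y => ∫ τ in a..y, c τ) (c x) (Ici x) x := by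
  have hIcc : Icc a b ∈ nhdsWithin x (Ioi x) :=
    Filter.mem_of_superset (Ioc_mem_nhdsGT_of_mem ⟨le_rfl, hx.2⟩)
      fun z hz => ⟨hx.1.trans hz.1.le, hz.2⟩
  exact intervalIntegral.integral_hasDerivWithinAt_right
    ((hc.mono (uIcc_subset_Icc (left_mem_Icc.2 (hx.1.trans hx.2.le)) (Ico_subset_Icc_self hx))
      ).intervalIntegrable)
    ⟨Icc a b, hIcc, hc.aestronglyMeasurable measurableSet_Icc⟩
    ((hc x (Ico_subset_Icc_self hx)).mono_of_mem_nhdsWithin hIcc)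

theorem eq_mul_exp_neg_integral_of_hasDerivWithinAt (hc : ContinuousOn c (Icc a b))
    (hv : ∀ x ∈ Icc a b, HasDerivWithinAt v (c x * v x) (Icc a b) x) :
    ∀ y ∈ Icc a b, v y = v b * exp (-∫ τ in y..b, c τ) := by
  intro y hy
  have hab : a ≤ b := hy.1.trans hy.2
  set G : ℝ → ℝ := fun y => ∫ τ in a..y, c τ
  have hGc : ContinuousOn G (Icc a b) := by
    simpa [uIcc_of_le hab] using intervalIntegral.continuousOn_primitive_interval
      (μ := MeasureTheory.volume) (a := a) (b := b)
      (by simpa [uIcc_of_le hab] using hc.integrableOn_Icc)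
  have hvc : ContinuousOn v (Icc a b) := fun x hx => (hv x hx).continuousWithinAt
  have hconst := constant_of_has_deriv_right_zero (f := fun y => v y * exp (-G y))
    (hvc.mul hGc.neg.rexp) fun x hx => by
      have hvx := (hv x (Ico_subset_Icc_self hx)).mono_of_mem_nhdsWithin
        (Icc_mem_nhdsGE_of_mem hx)
      exact (hvx.mul (hasDerivWithinAt_primitive_Ici_of_continuousOn hc hx).neg.exp).congr_deriv
        (by simp only [Pi.neg_apply]; ring)
  have hGyb : ∫ τ in y..b, c τ = G b - G y :=
    (intervalIntegral.integral_interval_sub_left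
      ((hc.mono (uIcc_subset_Icc (left_mem_Icc.2 hab) (right_mem_Icc.2 hab))).intervalIntegrable)
      ((hc.mono (uIcc_subset_Icc (left_mem_Icc.2 hab) hy)).intervalIntegrable)).symm
  have hvG : v y * exp (-G y) = v b * exp (-G b) := by
    rw [hconst y hy, hconst b (right_mem_Icc.2 hab)]
  rw [hGyb, show -(G b - G y) = -G b - -G y by ring, exp_sub, ← mul_div_assoc, ← hvG,
    mul_div_cancel_right₀ _ (exp_ne_zero _)]

end LinearODE

theorem hasDerivWithinAt_mach_defect {γ g Q : ℝ} {t : ℝ → ℝ} {s : Set ℝ} {x : ℝ}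
    (hs : γ - 1 + 2 * t x ≠ 0)
    (ht : HasDerivWithinAt t
      (-(g / Q ^ 2) * ((γ - 1) / 4) * (1 - γ - 2 * t x + (γ + 1) ^ 2 / (γ - 1 + 2 * t x))) s x) :
    HasDerivWithinAt (fun y => (γ + 1) ^ 2 - (γ - 1 + 2 * t y) ^ 2)
      ((γ - 1) * g * (Q ^ 2)⁻¹ * ((γ + 1) ^ 2 - (γ - 1 + 2 * t x) ^ 2)) s x := by
  refine ((((ht.const_mul 2).const_add (γ - 1)).pow 2).const_sub ((γ + 1) ^ 2)).congr_deriv ?_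
  field_simp
  ring

theorem eq_mach_formula_of_defect_eq {γ t₁ τ E : ℝ} (hγ : 1 < γ) (hτ : 0 ≤ γ - 1 + 2 * τ)
    (h : (γ + 1) ^ 2 - (γ - 1 + 2 * τ) ^ 2 = ((γ + 1) ^ 2 - (γ - 1 + 2 * t₁) ^ 2) * E) :
    τ = (γ + 1) / 2 * √(1 - (1 - ((γ - 1) / (γ + 1)) ^ 2 * (1 + 2 * t₁ / (γ - 1)) ^ 2) * E)
      - (γ - 1) / 2 := by
  have hγ₁ : γ - 1 ≠ 0 := by linarith
  have hγ₂ : 0 < γ + 1 := by linarith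
  -- `μ² (1 + 2t₁/(γ-1)) = (γ - 1 + 2t₁)/(γ + 1)`
  have hsq : 1 - (1 - ((γ - 1) / (γ + 1)) ^ 2 * (1 + 2 * t₁ / (γ - 1)) ^ 2) * E
      = ((γ - 1 + 2 * τ) / (γ + 1)) ^ 2 := by
    field_simp
    linear_combination h
  rw [hsq, sqrt_sq (by positivity)]
  field_simp
  ring

theorem mach_ode_uniqueness_general
    (γ g t₁ : ℝ) (q t : ℝ → ℝ) (hγ : 1 < γ)
    (hqc : ContinuousOn q (Set.Icc 0 1))
    (hqpos : ∀ y ∈ Set.Icc (0 : ℝ) 1, 0 < q y)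
    (htpos : ∀ y ∈ Set.Icc (0 : ℝ) 1, 0 < t y)
    (ht1 : t 1 = t₁)
    (ht' : ∀ y ∈ Set.Icc (0 : ℝ) 1,
      HasDerivWithinAt t
        (-(g / q y ^ 2) * ((γ - 1) / 4) *
          (1 - γ - 2 * t y + (γ + 1) ^ 2 / (γ - 1 + 2 * t y)))
        (Set.Icc 0 1) y) :
    ∀ y ∈ Set.Icc (0 : ℝ) 1,
      t y =
        (γ + 1) / 2 *
          Real.sqrt (1 -
            (1 - ((γ - 1) / (γ + 1)) ^ 2 * (1 + 2 * t₁ / (γ - 1)) ^ 2) *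
              Real.exp (-((γ - 1) * g * ∫ τ in y..1, (q τ ^ 2)⁻¹)))
        - (γ - 1) / 2 := by
  have hs : ∀ y ∈ Icc (0 : ℝ) 1, 0 < γ - 1 + 2 * t y := fun y hy => by linarith [htpos y hy]
  have hc : ContinuousOn (fun τ => (γ - 1) * g * (q τ ^ 2)⁻¹) (Icc 0 1) :=
    continuousOn_const.mul ((hqc.pow 2).inv₀ fun τ hτ => pow_ne_zero 2 (hqpos τ hτ).ne')
  have hdefect := eq_mul_exp_neg_integral_of_hasDerivWithinAt hc fun x hx =>
    hasDerivWithinAt_mach_defect (hs x hx).ne' (ht' x hx)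
  intro y hy
  have hy' := hdefect y hy
  rw [intervalIntegral.integral_const_mul, ht1] at hy'
  exact eq_mach_formula_of_defect_eq hγ (hs y hy).le hy'

/-- Uniqueness for the Mach-number ODE: any positive solution on `[0,1]` of
`t' = −(g/q²)·((γ−1)/4)·(1 − γ − 2t + (γ+1)²/(γ−1+2t))` with `t(1) = t₁` equals
the explicit formula
`t(y) = ((γ+1)/2)·√(1 − (1 − μ⁴(1 + 2t₁/(γ−1))²)·exp(−(γ−1)g∫_y^1 q⁻² dτ)) − (γ−1)/2`. -/
theorem mach_ode_uniqueness
    (γ g t₁ : ℝ) (q t : ℝ → ℝ) (hγ : 1 < γ)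
    (ht₁ : t₁ ∈ Set.Ioo (0 : ℝ) 1)
    (hqc : ContinuousOn q (Set.Icc 0 1))
    (hqpos : ∀ y ∈ Set.Icc (0 : ℝ) 1, 0 < q y)
    (htpos : ∀ y ∈ Set.Icc (0 : ℝ) 1, 0 < t y)
    (ht1 : t 1 = t₁)
    (ht' : ∀ y ∈ Set.Icc (0 : ℝ) 1,
      HasDerivWithinAt t
        (-(g / q y ^ 2) * ((γ - 1) / 4) *
          (1 - γ - 2 * t y + (γ + 1) ^ 2 / (γ - 1 + 2 * t y)))
        (Set.Icc 0 1) y) :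
    ∀ y ∈ Set.Icc (0 : ℝ) 1,
      t y =
        (γ + 1) / 2 *
          Real.sqrt (1 -
            (1 - ((γ - 1) / (γ + 1)) ^ 2 * (1 + 2 * t₁ / (γ - 1)) ^ 2) *
              Real.exp (-((γ - 1) * g * ∫ τ in y..1, (q τ ^ 2)⁻¹)))
        - (γ - 1) / 2 :=
  mach_ode_uniqueness_general γ g t₁ q t hγ hqc hqpos htpos ht1 ht'
end
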